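/- Discrete fundamental theorem (uniqueness): let θ, φ : ℤ → ℝ satisfy θᵢ ∈ (0, π/2] for even i, θᵢ = 0 for odd i, φᵢ ∈ [0, π/2] for odd i, φᵢ = 0 for even i. Let γ₀ ∈ ℝ³ and let (T₀, N₀, B₀) be pairwise orthogonal unit vectors with N₀ = B₀ × T₀. If γ and γ̃ are two discrete curves, each satisfying: unit edge lengths ‖(Dγ)ᵢ‖ = 1 for all i, the midpoint condition at even indices, Tᵉᵢ × Tᵉᵢ₊₁ ≠ 0 for even i, the positive-twist condition, initial data γ(0) = γ₀ and (Tᵉ₀, Nᵉ₀, Bᵉ₀) = (T₀, N₀, B₀), the angle between Tᵉᵢ and Tᵉᵢ₊₁ equal to θᵢ for all i, and the angle between Bᵉᵢ and Bᵉᵢ₊₁ equal to φᵢ for all i, then γ = γ̃. -/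

import Mathlib

/-!
The edge frame `(Tᵢ, Nᵢ, Bᵢ)` is an orthonormal basis of `ℝ³`, and it determines the frame at
`i ± 1`. Only one of `T`, `B` changes from `i` to `i ± 1` (`θ` vanishes at odd indices, `B` is
constant on the pairs `{2k, 2k + 1}`); the new vector is a unit vector whose component along one
frame vector is the cosine of a prescribed angle, whose component along another vanishes, and
whose `Nᵢ`-component has a fixed sign, coming from the definition of `B` as a normalized cross
product or from the positive-twist condition. A unit vector is determined by such data, so two
curves with the same frame at `0` have the same frames everywhere, and the same points since
`γᵢ₊₁ - γᵢ = Tᵢ`.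
-/

open RealInnerProductSpace

noncomputable section

/-- Points of a discrete curve live in `ℝ³` with the Euclidean norm. -/
abbrev E3 := EuclideanSpace ℝ (Fin 3)

/-- The cross product on `ℝ³`. -/
def cross3 (u v : E3) : E3 :=
  WithLp.toLp 2 ![u 1 * v 2 - u 2 * v 1, u 2 * v 0 - u 0 * v 2, u 0 * v 1 - u 1 * v 0]

open scoped Matrix

lemma cross3_eq_crossProduct (u v : E3) :
    cross3 u v = WithLp.toLp 2 (WithLp.ofLp u ⨯₃ WithLp.ofLp v) := by
  ext i; fin_cases i <;> simp [cross3, cross_apply]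

lemma inner_eq_dotProduct (u v : E3) : ⟪u, v⟫ = WithLp.ofLp u ⬝ᵥ WithLp.ofLp v := by
  simp [EuclideanSpace.inner_eq_star_dotProduct, dotProduct_comm]

lemma inner_cross3_self_left (u v : E3) : ⟪u, cross3 u v⟫ = 0 := by
  simp [inner_eq_dotProduct, cross3_eq_crossProduct, dot_self_cross]

lemma inner_cross3_self_right (u v : E3) : ⟪v, cross3 u v⟫ = 0 := by
  simp [inner_eq_dotProduct, cross3_eq_crossProduct, dot_cross_self]

lemma inner_cross3_left (u v w : E3) : ⟪cross3 u v, w⟫ = ⟪u, cross3 v w⟫ := by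
  simp only [inner_eq_dotProduct, cross3_eq_crossProduct]
  rw [dotProduct_comm, triple_product_permutation]

lemma cross3_anticomm (u v : E3) : cross3 v u = -cross3 u v := by
  rw [cross3_eq_crossProduct, cross3_eq_crossProduct, ← cross_anticomm]
  rfl

lemma norm_cross3_sq (u v : E3) : ‖cross3 u v‖ ^ 2 = ‖u‖ ^ 2 * ‖v‖ ^ 2 - ⟪u, v⟫ ^ 2 := by
  simp only [← real_inner_self_eq_norm_sq, inner_eq_dotProduct, cross3_eq_crossProduct,
    cross_dot_cross, dotProduct_comm (WithLp.ofLp v)]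
  ring

lemma orthonormal_cross3 {t b : E3} (ht : ‖t‖ = 1) (hb : ‖b‖ = 1) (htb : ⟪t, b⟫ = 0) :
    Orthonormal ℝ ![t, cross3 b t, b] := by
  have hn : ‖cross3 b t‖ = 1 := by
    have h : ‖cross3 b t‖ ^ 2 = 1 ^ 2 := by
      rw [norm_cross3_sq, hb, ht, real_inner_comm, htb]; norm_num
    exact (pow_left_inj₀ (norm_nonneg _) zero_le_one two_ne_zero).1 h
  have hbt : ⟪b, t⟫ = 0 := by rw [real_inner_comm, htb]
  rw [orthonormal_iff_ite]
  intro i j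
  fin_cases i <;> fin_cases j <;>
    simp [ht, hb, hn, htb, hbt, inner_cross3_self_left, inner_cross3_self_right,
      real_inner_comm _ (cross3 b t)]

theorem Orthonormal.eq_of_inner_eq_of_mul_nonneg {E ι : Type*} [NormedAddCommGroup E]
    [InnerProductSpace ℝ E] [Fintype ι] {e : ι → E} (he : Orthonormal ℝ e)
    (hcard : Fintype.card ι = Module.finrank ℝ E) {u v : E} (k : ι) (hnorm : ‖u‖ = ‖v‖)
    (hinner : ∀ j ≠ k, ⟪e j, u⟫ = ⟪e j, v⟫) (hsign : 0 ≤ ⟪e k, u⟫ * ⟪e k, v⟫) : u = v := by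
  classical
  have : Nonempty ι := ⟨k⟩
  let b := (basisOfOrthonormalOfCardEqFinrank he hcard).toOrthonormalBasis
    (by rwa [coe_basisOfOrthonormalOfCardEqFinrank])
  have hb : ⇑b = e := by simp [b]
  have parseval (x : E) : ‖x‖ ^ 2 = ⟪e k, x⟫ ^ 2 + ∑ j ∈ Finset.univ.erase k, ⟪e j, x⟫ ^ 2 := by
    rw [Finset.add_sum_erase _ (fun j => ⟪e j, x⟫ ^ 2) (Finset.mem_univ k),
      ← real_inner_self_eq_norm_sq, ← b.sum_inner_mul_inner x x, hb]
    simp only [real_inner_comm x, sq]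
  have hsq : ⟪e k, u⟫ ^ 2 = ⟪e k, v⟫ ^ 2 := by
    have hrest : ∑ j ∈ Finset.univ.erase k, ⟪e j, u⟫ ^ 2 =
        ∑ j ∈ Finset.univ.erase k, ⟪e j, v⟫ ^ 2 :=
      Finset.sum_congr rfl fun j hj => by rw [hinner j (Finset.ne_of_mem_erase hj)]
    linarith [parseval u, parseval v, congrArg (· ^ 2) hnorm]
  have hk : ⟪e k, u⟫ = ⟪e k, v⟫ := by
    rcases sq_eq_sq_iff_eq_or_eq_neg.1 hsq with h | h
    · exact h
    · rw [h] at hsign ⊢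
      nlinarith
  refine InnerProductSpace.ext_inner_left_basis b.toBasis fun j => ?_
  rw [OrthonormalBasis.coe_toBasis, hb]
  by_cases hj : j = k
  · rw [hj, hk]
  · exact hinner j hj

open InnerProductGeometry

structure IsEdgeFrame (θ φ : ℤ → ℝ) (T N B : ℤ → E3) : Prop where
  norm_tangent : ∀ i, ‖T i‖ = 1
  cross_ne_zero : ∀ i, Even i → cross3 (T i) (T (i + 1)) ≠ 0
  binormal_of_even : ∀ i, Even i →
    B i = ‖cross3 (T i) (T (i + 1))‖⁻¹ • cross3 (T i) (T (i + 1))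
  binormal_of_odd : ∀ i, Odd i → B i = B (i - 1)
  normal : ∀ i, N i = cross3 (B i) (T i)
  twist : ∀ i, Odd i → ⟪B (i + 1), N i⟫ ≤ 0
  angle_tangent : ∀ i, angle (T i) (T (i + 1)) = θ i
  angle_binormal : ∀ i, angle (B i) (B (i + 1)) = φ i

namespace IsEdgeFrame

variable {θ φ : ℤ → ℝ} {T N B : ℤ → E3}

lemma binormal_succ_of_even (hF : IsEdgeFrame θ φ T N B) {i : ℤ} (hi : Even i) :
    B (i + 1) = B i := by
  rw [hF.binormal_of_odd (i + 1) hi.add_one, add_sub_cancel_right]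

lemma norm_binormal_of_even (hF : IsEdgeFrame θ φ T N B) {i : ℤ} (hi : Even i) : ‖B i‖ = 1 := by
  rw [hF.binormal_of_even i hi, norm_smul, norm_inv, norm_norm,
    inv_mul_cancel₀ (norm_ne_zero_iff.2 (hF.cross_ne_zero i hi))]

lemma norm_binormal (hF : IsEdgeFrame θ φ T N B) (i : ℤ) : ‖B i‖ = 1 := by
  rcases Int.even_or_odd i with hi | hi
  · exact hF.norm_binormal_of_even hi
  · rw [hF.binormal_of_odd i hi]
    exact hF.norm_binormal_of_even (hi.sub_odd odd_one)

lemma inner_tangent_succ (hF : IsEdgeFrame θ φ T N B) (i : ℤ) :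
    ⟪T i, T (i + 1)⟫ = Real.cos (θ i) := by
  rw [inner_eq_cos_angle_of_norm_eq_one (hF.norm_tangent i) (hF.norm_tangent (i + 1)),
    hF.angle_tangent i]

lemma inner_tangent_pred (hF : IsEdgeFrame θ φ T N B) (i : ℤ) :
    ⟪T i, T (i - 1)⟫ = Real.cos (θ (i - 1)) := by
  rw [real_inner_comm]
  simpa using hF.inner_tangent_succ (i - 1)

lemma inner_binormal_succ (hF : IsEdgeFrame θ φ T N B) (i : ℤ) :
    ⟪B i, B (i + 1)⟫ = Real.cos (φ i) := by
  rw [inner_eq_cos_angle_of_norm_eq_one (hF.norm_binormal i) (hF.norm_binormal (i + 1)),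
    hF.angle_binormal i]

lemma inner_binormal_pred (hF : IsEdgeFrame θ φ T N B) (i : ℤ) :
    ⟪B i, B (i - 1)⟫ = Real.cos (φ (i - 1)) := by
  rw [real_inner_comm]
  simpa using hF.inner_binormal_succ (i - 1)

lemma tangent_succ_of_odd (hF : IsEdgeFrame θ φ T N B) (hθ : ∀ i, Odd i → θ i = 0) {i : ℤ}
    (hi : Odd i) : T (i + 1) = T i := by
  have h := hF.inner_tangent_succ i
  rw [hθ i hi, Real.cos_zero,
    inner_eq_one_iff_of_norm_eq_one (hF.norm_tangent i) (hF.norm_tangent (i + 1))] at h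
  exact h.symm

lemma tangent_pred_of_even (hF : IsEdgeFrame θ φ T N B) (hθ : ∀ i, Odd i → θ i = 0) {i : ℤ}
    (hi : Even i) : T (i - 1) = T i := by
  simpa using (hF.tangent_succ_of_odd hθ (hi.sub_odd odd_one)).symm

lemma inner_tangent_binormal_of_even (hF : IsEdgeFrame θ φ T N B) {i : ℤ} (hi : Even i) :
    ⟪T i, B i⟫ = 0 ∧ ⟪T (i + 1), B i⟫ = 0 := by
  rw [hF.binormal_of_even i hi, real_inner_smul_right, real_inner_smul_right,
    inner_cross3_self_left, inner_cross3_self_right]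
  simp

lemma inner_tangent_binormal (hF : IsEdgeFrame θ φ T N B) (i : ℤ) : ⟪T i, B i⟫ = 0 := by
  rcases Int.even_or_odd i with hi | hi
  · exact (hF.inner_tangent_binormal_of_even hi).1
  · have h := (hF.inner_tangent_binormal_of_even (hi.sub_odd odd_one)).2
    rwa [sub_add_cancel, ← hF.binormal_of_odd i hi] at h

lemma inner_binormal_tangent_succ_of_even (hF : IsEdgeFrame θ φ T N B) {i : ℤ} (hi : Even i) :
    ⟪B i, T (i + 1)⟫ = 0 := by
  rw [real_inner_comm, (hF.inner_tangent_binormal_of_even hi).2]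

lemma inner_binormal_tangent_pred_of_odd (hF : IsEdgeFrame θ φ T N B) {i : ℤ} (hi : Odd i) :
    ⟪B i, T (i - 1)⟫ = 0 := by
  rw [real_inner_comm, hF.binormal_of_odd i hi, hF.inner_tangent_binormal]

lemma inner_tangent_binormal_succ_of_odd (hF : IsEdgeFrame θ φ T N B)
    (hθ : ∀ i, Odd i → θ i = 0) {i : ℤ} (hi : Odd i) : ⟪T i, B (i + 1)⟫ = 0 := by
  rw [← hF.tangent_succ_of_odd hθ hi, hF.inner_tangent_binormal]

lemma inner_tangent_binormal_pred_of_even (hF : IsEdgeFrame θ φ T N B)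
    (hθ : ∀ i, Odd i → θ i = 0) {i : ℤ} (hi : Even i) : ⟪T i, B (i - 1)⟫ = 0 := by
  rw [← hF.tangent_pred_of_even hθ hi, hF.inner_tangent_binormal]

lemma orthonormal_frame (hF : IsEdgeFrame θ φ T N B) (i : ℤ) :
    Orthonormal ℝ ![T i, N i, B i] := by
  rw [hF.normal i]
  exact orthonormal_cross3 (hF.norm_tangent i) (hF.norm_binormal i) (hF.inner_tangent_binormal i)

lemma inner_binormal_cross_nonneg (hF : IsEdgeFrame θ φ T N B) {i : ℤ} (hi : Even i) :
    0 ≤ ⟪B i, cross3 (T i) (T (i + 1))⟫ := by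
  rw [hF.binormal_of_even i hi, real_inner_smul_left, real_inner_self_eq_norm_sq]
  positivity

lemma inner_normal_tangent_succ_nonneg (hF : IsEdgeFrame θ φ T N B) {i : ℤ} (hi : Even i) :
    0 ≤ ⟪N i, T (i + 1)⟫ := by
  rw [hF.normal i, inner_cross3_left]
  exact hF.inner_binormal_cross_nonneg hi

lemma inner_normal_tangent_pred_nonpos (hF : IsEdgeFrame θ φ T N B) {i : ℤ} (hi : Odd i) :
    ⟪N i, T (i - 1)⟫ ≤ 0 := by
  have h := hF.inner_binormal_cross_nonneg (hi.sub_odd odd_one)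
  rw [sub_add_cancel, ← hF.binormal_of_odd i hi] at h
  rw [hF.normal i, inner_cross3_left, cross3_anticomm, inner_neg_right]
  linarith

lemma inner_normal_binormal_succ_nonpos (hF : IsEdgeFrame θ φ T N B) {i : ℤ} (hi : Odd i) :
    ⟪N i, B (i + 1)⟫ ≤ 0 :=
  real_inner_comm (N i) (B (i + 1)) ▸ hF.twist i hi

lemma inner_normal_binormal_pred_nonneg (hF : IsEdgeFrame θ φ T N B)
    (hθ : ∀ i, Odd i → θ i = 0) {i : ℤ} (hi : Even i) : 0 ≤ ⟪N i, B (i - 1)⟫ := by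
  have h := hF.twist (i - 1) (hi.sub_odd odd_one)
  rw [sub_add_cancel, hF.normal (i - 1), hF.tangent_pred_of_even hθ hi, real_inner_comm,
    inner_cross3_left, cross3_anticomm, inner_neg_right, ← hF.normal i, real_inner_comm] at h
  linarith

lemma eq_of_inner_frame_eq (hF : IsEdgeFrame θ φ T N B) (i : ℤ) {u v : E3} (hu : ‖u‖ = 1)
    (hv : ‖v‖ = 1) (hT : ⟪T i, u⟫ = ⟪T i, v⟫) (hB : ⟪B i, u⟫ = ⟪B i, v⟫)
    (hN : 0 ≤ ⟪N i, u⟫ * ⟪N i, v⟫) : u = v :=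
  (hF.orthonormal_frame i).eq_of_inner_eq_of_mul_nonneg (by simp) 1 (hu.trans hv.symm)
    (fun j hj => by fin_cases j <;> simp_all) hN

variable {T' N' B' : ℤ → E3}

lemma eq_succ_of_eq (hF : IsEdgeFrame θ φ T N B) (hF' : IsEdgeFrame θ φ T' N' B')
    (hθ : ∀ i, Odd i → θ i = 0) {i : ℤ} (hT : T i = T' i) (hB : B i = B' i) :
    T (i + 1) = T' (i + 1) ∧ B (i + 1) = B' (i + 1) := by
  have hN : N i = N' i := by rw [hF.normal, hF'.normal, hT, hB]
  rcases Int.even_or_odd i with hi | hi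
  · refine ⟨hF.eq_of_inner_frame_eq i (hF.norm_tangent _) (hF'.norm_tangent _) ?_ ?_ ?_, ?_⟩
    · rw [hF.inner_tangent_succ, hT, hF'.inner_tangent_succ]
    · rw [hF.inner_binormal_tangent_succ_of_even hi, hB, hF'.inner_binormal_tangent_succ_of_even hi]
    · exact mul_nonneg (hF.inner_normal_tangent_succ_nonneg hi)
        (hN ▸ hF'.inner_normal_tangent_succ_nonneg hi)
    · rw [hF.binormal_succ_of_even hi, hF'.binormal_succ_of_even hi, hB]
  · refine ⟨?_, hF.eq_of_inner_frame_eq i (hF.norm_binormal _) (hF'.norm_binormal _) ?_ ?_ ?_⟩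
    · rw [hF.tangent_succ_of_odd hθ hi, hF'.tangent_succ_of_odd hθ hi, hT]
    · rw [hF.inner_tangent_binormal_succ_of_odd hθ hi, hT,
        hF'.inner_tangent_binormal_succ_of_odd hθ hi]
    · rw [hF.inner_binormal_succ, hB, hF'.inner_binormal_succ]
    · exact mul_nonneg_of_nonpos_of_nonpos (hF.inner_normal_binormal_succ_nonpos hi)
        (hN ▸ hF'.inner_normal_binormal_succ_nonpos hi)

lemma eq_pred_of_eq (hF : IsEdgeFrame θ φ T N B) (hF' : IsEdgeFrame θ φ T' N' B')
    (hθ : ∀ i, Odd i → θ i = 0) {i : ℤ} (hT : T i = T' i) (hB : B i = B' i) :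
    T (i - 1) = T' (i - 1) ∧ B (i - 1) = B' (i - 1) := by
  have hN : N i = N' i := by rw [hF.normal, hF'.normal, hT, hB]
  rcases Int.even_or_odd i with hi | hi
  · refine ⟨?_, hF.eq_of_inner_frame_eq i (hF.norm_binormal _) (hF'.norm_binormal _) ?_ ?_ ?_⟩
    · rw [hF.tangent_pred_of_even hθ hi, hF'.tangent_pred_of_even hθ hi, hT]
    · rw [hF.inner_tangent_binormal_pred_of_even hθ hi, hT,
        hF'.inner_tangent_binormal_pred_of_even hθ hi]
    · rw [hF.inner_binormal_pred, hB, hF'.inner_binormal_pred]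
    · exact mul_nonneg (hF.inner_normal_binormal_pred_nonneg hθ hi)
        (hN ▸ hF'.inner_normal_binormal_pred_nonneg hθ hi)
  · refine ⟨hF.eq_of_inner_frame_eq i (hF.norm_tangent _) (hF'.norm_tangent _) ?_ ?_ ?_, ?_⟩
    · rw [hF.inner_tangent_pred, hT, hF'.inner_tangent_pred]
    · rw [hF.inner_binormal_tangent_pred_of_odd hi, hB, hF'.inner_binormal_tangent_pred_of_odd hi]
    · exact mul_nonneg_of_nonpos_of_nonpos (hF.inner_normal_tangent_pred_nonpos hi)
        (hN ▸ hF'.inner_normal_tangent_pred_nonpos hi)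
    · rw [← hF.binormal_of_odd i hi, ← hF'.binormal_of_odd i hi, hB]

theorem tangent_unique (hF : IsEdgeFrame θ φ T N B) (hF' : IsEdgeFrame θ φ T' N' B')
    (hθ : ∀ i, Odd i → θ i = 0) (hT : T 0 = T' 0) (hB : B 0 = B' 0) : T = T' := by
  have h (i : ℤ) : T i = T' i ∧ B i = B' i := by
    induction i using Int.induction_on with
    | zero => exact ⟨hT, hB⟩
    | succ i ih => exact hF.eq_succ_of_eq hF' hθ ih.1 ih.2
    | pred i ih => exact hF.eq_pred_of_eq hF' hθ ih.1 ih.2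
  exact funext fun i => (h i).1

end IsEdgeFrame

theorem Int.eq_of_apply_zero_eq_of_sub_eq {α : Type*} [AddGroup α] {f g : ℤ → α}
    (h0 : f 0 = g 0) (h : ∀ i, f (i + 1) - f i = g (i + 1) - g i) : f = g := by
  funext i
  induction i using Int.induction_on with
  | zero => exact h0
  | succ i ih => rw [← sub_add_cancel (f (i + 1)) (f i), h i, ih, sub_add_cancel]
  | pred i ih =>
    have hi := h (-i - 1)
    rw [sub_add_cancel, ih] at hi
    exact sub_right_injective hi

theorem discrete_fundamental_theorem_uniqueness_general
    (θ φ : ℤ → ℝ)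
    (hθo : ∀ i : ℤ, Odd i → θ i = 0)
    (γ₀ T₀ N₀ B₀ : E3)
    -- the first curve `γ` and its edge Frenet frame
    (γ T N B : ℤ → E3)
    (hlen : ∀ i : ℤ, ‖γ (i + 1) - γ i‖ = 1)
    (hT : ∀ i : ℤ, T i = γ (i + 1) - γ i)
    (hcross : ∀ i : ℤ, Even i → cross3 (T i) (T (i + 1)) ≠ 0)
    (hBeven : ∀ i : ℤ, Even i →
      B i = ‖cross3 (T i) (T (i + 1))‖⁻¹ • cross3 (T i) (T (i + 1)))
    (hBodd : ∀ i : ℤ, Odd i → B i = B (i - 1))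
    (hN : ∀ i : ℤ, N i = cross3 (B i) (T i))
    (htwist : ∀ i : ℤ, Odd i → ⟪B (i + 1), N i⟫ ≤ 0)
    (hinit : γ 0 = γ₀ ∧ T 0 = T₀ ∧ N 0 = N₀ ∧ B 0 = B₀)
    (hangT : ∀ i : ℤ, InnerProductGeometry.angle (T i) (T (i + 1)) = θ i)
    (hangB : ∀ i : ℤ, InnerProductGeometry.angle (B i) (B (i + 1)) = φ i)
    -- the second curve `γ'` and its edge Frenet frame
    (γ' T' N' B' : ℤ → E3)
    (hlen' : ∀ i : ℤ, ‖γ' (i + 1) - γ' i‖ = 1)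
    (hT' : ∀ i : ℤ, T' i = γ' (i + 1) - γ' i)
    (hcross' : ∀ i : ℤ, Even i → cross3 (T' i) (T' (i + 1)) ≠ 0)
    (hBeven' : ∀ i : ℤ, Even i →
      B' i = ‖cross3 (T' i) (T' (i + 1))‖⁻¹ • cross3 (T' i) (T' (i + 1)))
    (hBodd' : ∀ i : ℤ, Odd i → B' i = B' (i - 1))
    (hN' : ∀ i : ℤ, N' i = cross3 (B' i) (T' i))
    (htwist' : ∀ i : ℤ, Odd i → ⟪B' (i + 1), N' i⟫ ≤ 0)
    (hinit' : γ' 0 = γ₀ ∧ T' 0 = T₀ ∧ N' 0 = N₀ ∧ B' 0 = B₀)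
    (hangT' : ∀ i : ℤ, InnerProductGeometry.angle (T' i) (T' (i + 1)) = θ i)
    (hangB' : ∀ i : ℤ, InnerProductGeometry.angle (B' i) (B' (i + 1)) = φ i) :
    γ = γ' := by
  obtain ⟨hγ0, hT0, -, hB0⟩ := hinit
  obtain ⟨hγ0', hT0', -, hB0'⟩ := hinit'
  have hF : IsEdgeFrame θ φ T N B :=
    ⟨fun i => hT i ▸ hlen i, hcross, hBeven, hBodd, hN, htwist, hangT, hangB⟩
  have hF' : IsEdgeFrame θ φ T' N' B' :=
    ⟨fun i => hT' i ▸ hlen' i, hcross', hBeven', hBodd', hN', htwist', hangT', hangB'⟩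
  have hTT' : T = T' := hF.tangent_unique hF' hθo (hT0.trans hT0'.symm) (hB0.trans hB0'.symm)
  exact Int.eq_of_apply_zero_eq_of_sub_eq (hγ0.trans hγ0'.symm) fun i => by
    rw [← hT, ← hT', hTT']

/-- Discrete fundamental theorem (uniqueness): two discrete curves parametrized by arc
length, satisfying the midpoint condition and the positive-twist condition, with the same
initial point, the same initial edge frame, and the same turning angles `θᵢ` between
consecutive tangents and twisting angles `φᵢ` between consecutive binormals, coincide. -/
theorem discrete_fundamental_theorem_uniqueness
    (θ φ : ℤ → ℝ)
    (hθe : ∀ i : ℤ, Even i → θ i ∈ Set.Ioc 0 (Real.pi / 2))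
    (hθo : ∀ i : ℤ, Odd i → θ i = 0)
    (hφo : ∀ i : ℤ, Odd i → φ i ∈ Set.Icc 0 (Real.pi / 2))
    (hφe : ∀ i : ℤ, Even i → φ i = 0)
    (γ₀ T₀ N₀ B₀ : E3)
    (hT₀ : ‖T₀‖ = 1) (hN₀ : ‖N₀‖ = 1) (hB₀ : ‖B₀‖ = 1)
    (hTN₀ : ⟪T₀, N₀⟫ = 0) (hTB₀ : ⟪T₀, B₀⟫ = 0) (hNB₀ : ⟪N₀, B₀⟫ = 0)
    (hor₀ : N₀ = cross3 B₀ T₀)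
    -- the first curve `γ` and its edge Frenet frame
    (γ T N B : ℤ → E3)
    (hlen : ∀ i : ℤ, ‖γ (i + 1) - γ i‖ = 1)
    (hmid : ∀ i : ℤ, Even i → γ i = (2 : ℝ)⁻¹ • (γ (i + 1) + γ (i - 1)))
    (hT : ∀ i : ℤ, T i = γ (i + 1) - γ i)
    (hcross : ∀ i : ℤ, Even i → cross3 (T i) (T (i + 1)) ≠ 0)
    (hBeven : ∀ i : ℤ, Even i →
      B i = ‖cross3 (T i) (T (i + 1))‖⁻¹ • cross3 (T i) (T (i + 1)))
    (hBodd : ∀ i : ℤ, Odd i → B i = B (i - 1))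
    (hN : ∀ i : ℤ, N i = cross3 (B i) (T i))
    (htwist : ∀ i : ℤ, Odd i → ⟪B (i + 1), N i⟫ ≤ 0)
    (hinit : γ 0 = γ₀ ∧ T 0 = T₀ ∧ N 0 = N₀ ∧ B 0 = B₀)
    (hangT : ∀ i : ℤ, InnerProductGeometry.angle (T i) (T (i + 1)) = θ i)
    (hangB : ∀ i : ℤ, InnerProductGeometry.angle (B i) (B (i + 1)) = φ i)
    -- the second curve `γ'` and its edge Frenet frame
    (γ' T' N' B' : ℤ → E3)
    (hlen' : ∀ i : ℤ, ‖γ' (i + 1) - γ' i‖ = 1)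
    (hmid' : ∀ i : ℤ, Even i → γ' i = (2 : ℝ)⁻¹ • (γ' (i + 1) + γ' (i - 1)))
    (hT' : ∀ i : ℤ, T' i = γ' (i + 1) - γ' i)
    (hcross' : ∀ i : ℤ, Even i → cross3 (T' i) (T' (i + 1)) ≠ 0)
    (hBeven' : ∀ i : ℤ, Even i →
      B' i = ‖cross3 (T' i) (T' (i + 1))‖⁻¹ • cross3 (T' i) (T' (i + 1)))
    (hBodd' : ∀ i : ℤ, Odd i → B' i = B' (i - 1))
    (hN' : ∀ i : ℤ, N' i = cross3 (B' i) (T' i))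
    (htwist' : ∀ i : ℤ, Odd i → ⟪B' (i + 1), N' i⟫ ≤ 0)
    (hinit' : γ' 0 = γ₀ ∧ T' 0 = T₀ ∧ N' 0 = N₀ ∧ B' 0 = B₀)
    (hangT' : ∀ i : ℤ, InnerProductGeometry.angle (T' i) (T' (i + 1)) = θ i)
    (hangB' : ∀ i : ℤ, InnerProductGeometry.angle (B' i) (B' (i + 1)) = φ i) :
    γ = γ' :=
  discrete_fundamental_theorem_uniqueness_general θ φ hθo γ₀ T₀ N₀ B₀ γ T N B hlen hT hcross hBeven
    hBodd hN htwist hinit hangT hangB γ' T' N' B' hlen' hT' hcross' hBeven' hBodd' hN' htwist'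
    hinit' hangT' hangB'
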